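/- Let D > 0 and C ∈ ℝ. Let F : (0,∞) → ℝ be locally integrable and possess a one-sided limit F(t−) from the left and F(t+) from the right at every t > 0, and assume that F(τ₂+) + D ∫_{τ₁}^{τ₂} F(t) dt ≤ F(τ₁−) + C·(τ₂ − τ₁) holds for all 0 < τ₁ ≤ τ₂. Then the function t ↦ exp(D t)·(F(t) − C/D) is non-increasing on (0,∞) in the sense that exp(D τ₂)·(F(τ₂+) − C/D) ≤ exp(D τ₁)·(F(τ₁−) − C/D) for all 0 < τ₁ ≤ τ₂. -/

import Mathlib

/-!
Fix `τ₁ ≤ τ₂` and put `v s = F(τ₂+) - C/D + D ∫_s^{τ₂} F - C (τ₂ - s)`. The hypothesis applied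
to `(s, τ₂)` says `v s ≤ F(s-) - C/D`, while the left derivative of `v` at `s` is
`C - D F(s-) ≤ -D v s`. So `s ↦ exp (D s) v s` has nonpositive left derivatives and is
non-increasing on `[τ₁, τ₂]`; its values at the endpoints give the claim.
-/

open MeasureTheory Filter Set Topology

theorem nhdsLE_inf_ae_le_nhdsLT {α : Type*} [TopologicalSpace α] [LinearOrder α]
    [MeasurableSpace α] {μ : Measure α} [NullSingletonClass μ] (x : α) :
    𝓝[≤] x ⊓ ae μ ≤ 𝓝[<] x := by
  calc 𝓝[≤] x ⊓ ae μ ≤ 𝓝[≤] x ⊓ 𝓟 {x}ᶜ :=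
        inf_le_inf_left _ (le_principal_iff.2 (compl_mem_ae_iff.2 (measure_singleton x)))
    _ = 𝓝[<] x := by rw [← nhdsWithin_inter', ← sdiff_eq, Iic_sdiff_right]

theorem hasDerivWithinAt_integral_Iic_of_tendsto_nhdsLT {E : Type*} [NormedAddCommGroup E]
    [NormedSpace ℝ E] [CompleteSpace E] {f : ℝ → E} {a b s : ℝ} {c : E}
    (hf : IntervalIntegrable f volume a b) (hs : s ∈ Ioc a b) (hc : Tendsto f (𝓝[<] s) (𝓝 c)) :
    HasDerivWithinAt (fun u => ∫ x in u..b, f x) (-c) (Iic s) s := by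
  have hmeas : StronglyMeasurableAtFilter f (𝓝[≤] s) :=
    ⟨Ioc a b, mem_of_superset (Ioc_mem_nhdsLE hs.1) (Ioc_subset_Ioc_right hs.2),
      hf.1.aestronglyMeasurable⟩
  have hsb : IntervalIntegrable f volume s b :=
    hf.mono_set (uIcc_subset_uIcc_right (mem_uIcc_of_le hs.1.le hs.2))
  exact intervalIntegral.integral_hasDerivWithinAt_of_tendsto_ae_left hsb hmeas
    (hc.mono_left (nhdsLE_inf_ae_le_nhdsLT s))

theorem antitoneOn_of_hasDerivWithinAt_Iic_nonpos {f f' : ℝ → ℝ} {a b : ℝ}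
    (hf : ContinuousOn f (Icc a b)) (hf' : ∀ x ∈ Ioc a b, HasDerivWithinAt f (f' x) (Iic x) x)
    (hf'₀ : ∀ x ∈ Ioc a b, f' x ≤ 0) : AntitoneOn f (Icc a b) := by
  intro x hx y hy hxy
  -- reflect, so that the right-derivative fencing theorem applies
  have hg : ContinuousOn (fun r => -f (-r)) (Icc (-y) (-x)) := by
    refine (hf.comp continuous_neg.continuousOn ?_).neg
    intro r hr
    exact ⟨by linarith [hx.1, hr.2], by linarith [hy.2, hr.1]⟩
  have hg' : ∀ r ∈ Ico (-y) (-x), HasDerivWithinAt (fun r => -f (-r)) (f' (-r)) (Ici r) r := by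
    intro r hr
    have hr' : -r ∈ Ioc a b := ⟨by linarith [hx.1, hr.2], by linarith [hy.2, hr.1]⟩
    exact ((hf' (-r) hr').neg.comp r (hasDerivWithinAt_neg r (Ici r))
      (fun z hz => neg_le_neg (mem_Ici.1 hz))).congr_deriv (by ring)
  have := image_le_of_deriv_right_le_deriv_boundary hg hg' (le_refl (-f (- -y)))
    continuousOn_const (fun _ _ => hasDerivWithinAt_const _ _ _)
    (fun r hr => hf'₀ (-r) ⟨by linarith [hx.1, hr.2], by linarith [hy.2, hr.1]⟩)
    (right_mem_Icc.2 (neg_le_neg hxy))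
  simpa using this

theorem antitoneOn_exp_mul_of_hasDerivWithinAt_Iic {v v' : ℝ → ℝ} {a b D : ℝ}
    (hv : ContinuousOn v (Icc a b)) (hv' : ∀ x ∈ Ioc a b, HasDerivWithinAt v (v' x) (Iic x) x)
    (hvD : ∀ x ∈ Ioc a b, v' x + D * v x ≤ 0) :
    AntitoneOn (fun x => Real.exp (D * x) * v x) (Icc a b) := by
  refine antitoneOn_of_hasDerivWithinAt_Iic_nonpos
    (f' := fun x => Real.exp (D * x) * (v' x + D * v x))
    ((Real.continuous_exp.comp (continuous_const_mul D)).continuousOn.mul hv) (fun x hx => ?_)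
    (fun x hx => mul_nonpos_of_nonneg_of_nonpos (Real.exp_pos _).le (hvD x hx))
  have hexp : HasDerivWithinAt (fun x => Real.exp (D * x)) (Real.exp (D * x) * D) (Iic x) x :=
    (((hasDerivAt_id x).const_mul D).exp.hasDerivWithinAt).congr_deriv (by simp)
  exact (hexp.mul (hv' x hx)).congr_deriv (by ring)

theorem stmt_1_general (D C : ℝ) (hD : 0 < D) (F Fm Fp : ℝ → ℝ)
    (hloc : ∀ a b : ℝ, 0 < a → a ≤ b → IntervalIntegrable F volume a b)
    (hFm : ∀ t : ℝ, 0 < t → Tendsto F (nhdsWithin t (Iio t)) (nhds (Fm t)))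
    (hineq : ∀ τ₁ τ₂ : ℝ, 0 < τ₁ → τ₁ ≤ τ₂ →
      Fp τ₂ + D * ∫ t in τ₁..τ₂, F t ≤ Fm τ₁ + C * (τ₂ - τ₁)) :
    ∀ τ₁ τ₂ : ℝ, 0 < τ₁ → τ₁ ≤ τ₂ →
      Real.exp (D * τ₂) * (Fp τ₂ - C / D) ≤ Real.exp (D * τ₁) * (Fm τ₁ - C / D) := by
  intro τ₁ τ₂ hτ₁ hτ₁₂
  set v : ℝ → ℝ := fun s => Fp τ₂ - C / D + D * (∫ t in s..τ₂, F t) - C * (τ₂ - s)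
  have hF : IntervalIntegrable F volume τ₁ τ₂ := hloc τ₁ τ₂ hτ₁ hτ₁₂
  have hv_le : ∀ s ∈ Icc τ₁ τ₂, v s ≤ Fm s - C / D := fun s hs => by
    linarith [hineq s τ₂ (hτ₁.trans_le hs.1) hs.2]
  have hv_cont : ContinuousOn v (Icc τ₁ τ₂) := by
    have := intervalIntegral.continuousOn_primitive_interval_left
      ((intervalIntegrable_iff').1 hF)
    rw [uIcc_of_le hτ₁₂] at this
    exact (continuousOn_const.add (continuousOn_const.mul this)).sub
      (continuousOn_const.mul (continuousOn_const.sub continuousOn_id))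
  have hv' : ∀ s ∈ Ioc τ₁ τ₂, HasDerivWithinAt v (C - D * Fm s) (Iic s) s := fun s hs => by
    have hint := hasDerivWithinAt_integral_Iic_of_tendsto_nhdsLT hF hs (hFm s (hτ₁.trans hs.1))
    exact (((hint.const_mul D).const_add _).sub
      (((hasDerivWithinAt_id s _).const_sub τ₂).const_mul C)).congr_deriv (by ring)
  have hvD : ∀ s ∈ Ioc τ₁ τ₂, C - D * Fm s + D * v s ≤ 0 := fun s hs =>
    calc C - D * Fm s + D * v s = D * (v s - (Fm s - C / D)) := by
          linear_combination -mul_div_cancel₀ C hD.ne'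
      _ ≤ 0 := mul_nonpos_of_nonneg_of_nonpos hD.le
          (sub_nonpos.2 (hv_le s (Ioc_subset_Icc_self hs)))
  calc Real.exp (D * τ₂) * (Fp τ₂ - C / D) = Real.exp (D * τ₂) * v τ₂ := by simp [v]
    _ ≤ Real.exp (D * τ₁) * v τ₁ := antitoneOn_exp_mul_of_hasDerivWithinAt_Iic hv_cont hv' hvD
        (left_mem_Icc.2 hτ₁₂) (right_mem_Icc.2 hτ₁₂) hτ₁₂
    _ ≤ Real.exp (D * τ₁) * (Fm τ₁ - C / D) :=
        mul_le_mul_of_nonneg_left (hv_le τ₁ (left_mem_Icc.2 hτ₁₂)) (Real.exp_pos _).le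

/-- If `F` is locally integrable on `(0,∞)`, possesses one-sided limits `Fm t` (from the
left) and `Fp t` (from the right) at every `t > 0`, and satisfies
`F(τ₂+) + D ∫_{τ₁}^{τ₂} F ≤ F(τ₁−) + C (τ₂ − τ₁)` for all `0 < τ₁ ≤ τ₂`, then the function
`t ↦ exp(Dt) (F(t) − C/D)` is non-increasing on `(0,∞)`, in the sense that
`exp(Dτ₂) (F(τ₂+) − C/D) ≤ exp(Dτ₁) (F(τ₁−) − C/D)` for all `0 < τ₁ ≤ τ₂`. -/
theorem stmt_1 (D C : ℝ) (hD : 0 < D) (F Fm Fp : ℝ → ℝ)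
    (hloc : ∀ a b : ℝ, 0 < a → a ≤ b → IntervalIntegrable F volume a b)
    (hFm : ∀ t : ℝ, 0 < t → Tendsto F (nhdsWithin t (Iio t)) (nhds (Fm t)))
    (hFp : ∀ t : ℝ, 0 < t → Tendsto F (nhdsWithin t (Ioi t)) (nhds (Fp t)))
    (hineq : ∀ τ₁ τ₂ : ℝ, 0 < τ₁ → τ₁ ≤ τ₂ →
      Fp τ₂ + D * ∫ t in τ₁..τ₂, F t ≤ Fm τ₁ + C * (τ₂ - τ₁)) :
    ∀ τ₁ τ₂ : ℝ, 0 < τ₁ → τ₁ ≤ τ₂ →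
      Real.exp (D * τ₂) * (Fp τ₂ - C / D) ≤ Real.exp (D * τ₁) * (Fm τ₁ - C / D) :=
  stmt_1_general D C hD F Fm Fp hloc hFm hineq
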